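/- Vorticity accumulation on the boundary for the explicit example: for every continuous function ψ : [0,1] → ℝ, lim_{ε→0⁺} ∫_0¹ ω₂^ε(z) ψ(z) dz = ∫_0¹ (1 − 2z) ψ(z) dz + ψ(0) − ψ(1), where ω₂^ε(z) = 1 − 2z + (1−2ε) · ((1−e^{−1/√ε})/(1−e^{−2/√ε})) · ε^{−1/2} (e^{−z/√ε} − e^{−(1−z)/√ε}). -/

import Mathlib

/-!
With `t = ε^(-1/2)` the vorticity reads `ω₂^ε(z) = 1 - 2z + c_ε (t e^{-tz} - t e^{-t(1-z)})`,
where `c_ε = (1 - 2ε)/(1 + e^{-t}) → 1` because `1 - e^{-2t} = (1 - e^{-t})(1 + e^{-t})`.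
On `[0, a]` the kernel `t e^{-tz}` is nonnegative, has mass `1 - e^{-ta} → 1` and tends to `0`
uniformly away from `z = 0`, so it is an approximate identity at `0` as `t → ∞`; its reflection
`t e^{-t(a-z)}` is one at `a`. Hence the two boundary layers contribute `ψ 0 - ψ 1` in the limit.
-/

open Real Filter MeasureTheory Set Topology

/-- The exact vorticity component `ω₂^ε` for the data `f₁(z) = 1 + z(1−z)`. -/
noncomputable def omega2Exact (ε z : ℝ) : ℝ :=
  1 - 2 * z
    + (1 - 2 * ε)
      * ((1 - Real.exp (-1 / Real.sqrt ε)) / (1 - Real.exp (-2 / Real.sqrt ε)))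
      * ε ^ (-(1:ℝ)/2)
      * (Real.exp (-z / Real.sqrt ε) - Real.exp (-(1 - z) / Real.sqrt ε))

noncomputable def expKernel (t z : ℝ) : ℝ := t * exp (-(t * z))

lemma integral_expKernel (t a : ℝ) : ∫ z in (0:ℝ)..a, expKernel t z = 1 - exp (-(t * a)) := by
  have hderiv : ∀ z ∈ uIcc 0 a, HasDerivAt (fun z => -exp (-(t * z))) (expKernel t z) z := by
    intro z _
    refine (((hasDerivAt_id z).const_mul t).fun_neg.exp).fun_neg.congr_deriv ?_
    rw [expKernel, id]; ring
  rw [intervalIntegral.integral_eq_sub_of_hasDerivAt hderiv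
    ((by unfold expKernel; fun_prop : Continuous (expKernel t)).intervalIntegrable _ _)]
  simp only [mul_zero, neg_zero, exp_zero, sub_neg_eq_add]
  ring

lemma tendsto_mul_exp_neg_mul_atTop {δ : ℝ} (hδ : 0 < δ) :
    Tendsto (fun t : ℝ => t * exp (-(t * δ))) atTop (𝓝 0) := by
  refine (tendsto_rpow_mul_exp_neg_mul_atTop_nhds_zero 1 δ hδ).congr fun t => ?_
  rw [rpow_one, neg_mul, mul_comm δ]

lemma tendstoUniformlyOn_expKernel_Ici {δ : ℝ} (hδ : 0 < δ) :
    TendstoUniformlyOn expKernel 0 atTop (Ici δ) := by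
  rw [Metric.tendstoUniformlyOn_iff]
  intro ρ hρ
  filter_upwards [(tendsto_mul_exp_neg_mul_atTop hδ).eventually (gt_mem_nhds hρ),
    eventually_ge_atTop 0] with t hbound ht z (hδz : δ ≤ z)
  have hK : expKernel t z ≤ t * exp (-(t * δ)) := by
    unfold expKernel; gcongr
  rw [Pi.zero_apply, dist_zero_left, expKernel, Real.norm_of_nonneg (mul_nonneg ht (exp_pos _).le)]
  exact hK.trans_lt hbound

lemma tendsto_integral_expKernel_mul {a : ℝ} (ha : 0 < a) {g : ℝ → ℝ}
    (hg : ContinuousOn g (Icc 0 a)) :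
    Tendsto (fun t => ∫ z in (0:ℝ)..a, expKernel t z * g z) atTop (𝓝 (g 0)) := by
  have hIcc : ∀ f : ℝ → ℝ, ∫ z in (0:ℝ)..a, f z = ∫ z in Icc 0 a, f z := fun f => by
    rw [intervalIntegral.integral_of_le ha.le, integral_Icc_eq_integral_Ioc]
  simp_rw [hIcc, ← smul_eq_mul (a := expKernel _ _)]
  refine tendsto_setIntegral_peak_smul_of_integrableOn_of_tendsto measurableSet_Icc
    measurableSet_Icc subset_rfl self_mem_nhdsWithin measure_Icc_lt_top.ne ?_ ?_ ?_ ?_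
    hg.integrableOn_Icc (hg 0 ⟨le_rfl, ha.le⟩)
  · filter_upwards [eventually_ge_atTop 0] with t ht z _
    exact mul_nonneg ht (exp_pos _).le
  · intro u hu h0u
    obtain ⟨δ, hδ, hball⟩ := Metric.isOpen_iff.1 hu 0 h0u
    refine (tendstoUniformlyOn_expKernel_Ici hδ).mono fun z ⟨⟨hz0, _⟩, hzu⟩ => ?_
    by_contra! h
    exact hzu (hball (by simpa [Real.dist_eq, abs_of_nonneg hz0] using h))
  · simp_rw [← hIcc, integral_expKernel]
    simpa using tendsto_const_nhds.sub
      (tendsto_exp_atBot.comp (tendsto_neg_atBot_iff.2 (tendsto_id.atTop_mul_const ha)))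
  · exact Eventually.of_forall fun t =>
      (by unfold expKernel; fun_prop : Continuous (expKernel t)).aestronglyMeasurable

lemma tendsto_integral_expKernel_sub_mul {a : ℝ} (ha : 0 < a) {g : ℝ → ℝ}
    (hg : ContinuousOn g (Icc 0 a)) :
    Tendsto (fun t => ∫ z in (0:ℝ)..a, expKernel t (a - z) * g z) atTop (𝓝 (g a)) := by
  have hreflect : ContinuousOn (fun z => g (a - z)) (Icc 0 a) :=
    hg.comp (continuousOn_const.sub continuousOn_id) fun z ⟨hz0, hza⟩ => ⟨by linarith, by linarith⟩
  have := tendsto_integral_expKernel_mul ha hreflect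
  rw [sub_zero] at this
  refine this.congr fun t => ?_
  have := intervalIntegral.integral_comp_sub_left (a := 0) (b := a)
    (fun z => expKernel t z * g (a - z)) a
  simp only [sub_sub_cancel, sub_self, sub_zero] at this
  exact this.symm

lemma omega2Exact_eq {ε : ℝ} (hε : 0 < ε) (z : ℝ) :
    omega2Exact ε z = 1 - 2 * z + (1 - 2 * ε) / (1 + exp (-ε ^ (-(1:ℝ)/2))) *
      (expKernel (ε ^ (-(1:ℝ)/2)) z - expKernel (ε ^ (-(1:ℝ)/2)) (1 - z)) := by
  set t := ε ^ (-(1:ℝ)/2) with ht_def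
  have ht : (√ε)⁻¹ = t := by
    rw [ht_def, neg_div, rpow_neg hε.le, sqrt_eq_rpow]
  have hdiv : ∀ x, x / √ε = x * t := fun x => by rw [div_eq_mul_inv, ht]
  have hpos : 0 < t := by rw [← ht]; positivity
  have hne : 1 - exp (-t) ≠ 0 := (sub_pos.2 (exp_lt_one_iff.2 (neg_neg_of_pos hpos))).ne'
  have hsq : exp (-2 / √ε) = exp (-t) ^ 2 := by
    rw [hdiv, ← exp_nat_mul]; ring_nf
  have h1 : (1 : ℝ) - exp (-t) ^ 2 = (1 - exp (-t)) * (1 + exp (-t)) := by ring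
  rw [omega2Exact, hsq, h1, hdiv, hdiv, hdiv, neg_one_mul, div_mul_cancel_left₀ hne, ← ht_def,
    expKernel, expKernel]
  ring_nf

lemma integral_omega2Exact_mul {ε : ℝ} (hε : 0 < ε) {ψ : ℝ → ℝ}
    (hψ : ContinuousOn ψ (Icc 0 1)) :
    ∫ z in (0:ℝ)..1, omega2Exact ε z * ψ z =
      (∫ z in (0:ℝ)..1, (1 - 2 * z) * ψ z) + (1 - 2 * ε) / (1 + exp (-ε ^ (-(1:ℝ)/2))) *
        ((∫ z in (0:ℝ)..1, expKernel (ε ^ (-(1:ℝ)/2)) z * ψ z) -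
          ∫ z in (0:ℝ)..1, expKernel (ε ^ (-(1:ℝ)/2)) (1 - z) * ψ z) := by
  have hψ' : ContinuousOn ψ (uIcc 0 1) := by rwa [uIcc_of_le zero_le_one]
  have hint : ∀ f : ℝ → ℝ, Continuous f → IntervalIntegrable (fun z => f z * ψ z) volume 0 1 :=
    fun f hf => (hf.continuousOn.mul hψ').intervalIntegrable
  have hK : Continuous (expKernel (ε ^ (-(1:ℝ)/2))) := by unfold expKernel; fun_prop
  have hK₁ := hint _ hK
  have hK₂ := hint (fun z => expKernel (ε ^ (-(1:ℝ)/2)) (1 - z)) (hK.comp (by fun_prop))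
  rw [← intervalIntegral.integral_sub hK₁ hK₂, ← intervalIntegral.integral_const_mul,
    ← intervalIntegral.integral_add (hint _ (by fun_prop)) ((hK₁.sub hK₂).const_mul _)]
  congr 1 with z
  rw [omega2Exact_eq hε]
  ring

/-- Vorticity accumulation on the boundary for the explicit example:
for every continuous `ψ : [0,1] → ℝ`,
`lim_{ε→0⁺} ∫₀¹ ω₂^ε(z) ψ(z) dz = ∫₀¹ (1−2z) ψ(z) dz + ψ(0) − ψ(1)`. -/
theorem statement17 (ψ : ℝ → ℝ) (hψ : ContinuousOn ψ (Set.Icc 0 1)) :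
    Filter.Tendsto
      (fun ε : ℝ => ∫ z in (0:ℝ)..1, omega2Exact ε z * ψ z)
      (nhdsWithin 0 (Set.Ioi 0))
      (nhds ((∫ z in (0:ℝ)..1, (1 - 2 * z) * ψ z) + ψ 0 - ψ 1)) := by
  have hscale : Tendsto (fun ε : ℝ => ε ^ (-(1:ℝ)/2)) (𝓝[>] 0) atTop :=
    tendsto_rpow_neg_nhdsGT_zero (by norm_num)
  have hcoef : Tendsto (fun ε : ℝ => (1 - 2 * ε) / (1 + exp (-ε ^ (-(1:ℝ)/2)))) (𝓝[>] 0)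
      (𝓝 1) := by
    have hlin : Tendsto (fun ε : ℝ => 1 - 2 * ε) (𝓝[>] 0) (𝓝 1) :=
      ((by fun_prop : Continuous fun ε : ℝ => 1 - 2 * ε).tendsto' 0 1 (by norm_num)).mono_left
        nhdsWithin_le_nhds
    have hexp : Tendsto (fun ε : ℝ => exp (-ε ^ (-(1:ℝ)/2))) (𝓝[>] 0) (𝓝 0) :=
      tendsto_exp_atBot.comp (tendsto_neg_atTop_atBot.comp hscale)
    have := hlin.div (tendsto_const_nhds.add hexp) (by norm_num : (1:ℝ) + 0 ≠ 0)
    rwa [add_zero, div_one] at this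
  have hpeaks := (tendsto_integral_expKernel_mul one_pos hψ).sub
    (tendsto_integral_expKernel_sub_mul one_pos hψ)
  rw [add_sub_assoc, ← one_mul (ψ 0 - ψ 1)]
  refine (tendsto_const_nhds.add (hcoef.mul (hpeaks.comp hscale))).congr' ?_
  filter_upwards [self_mem_nhdsWithin] with ε hε
  exact (integral_omega2Exact_mul hε hψ).symm
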